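/- arXiv:1707.08277 — 2 statements merged into one kernel-verified Lean document; each statement's English description precedes it below -/
import Mathlib

section
/- Let A be an n×n real symmetric positive definite matrix with energy decomposition ℰ = {E_k}_{k=1}^m, and let 𝒫 = {P_j}_{j=1}^M be a partition of {1,…,n}. Then Σ_{j=1}^M underline(A)_{P_j} ⪯ A ⪯ Σ_{j=1}^M overline(A)_{P_j} in the Loewner order. -/
open Matrix BigOperators
open scoped Classical

noncomputable section

/-- The 0/1 diagonal projection matrix onto the coordinates in `S`. -/
def projSet {n : ℕ} (S : Finset (Fin n)) : Matrix (Fin n) (Fin n) ℝ :=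
  Matrix.diagonal (fun i => if i ∈ S then (1:ℝ) else 0)

/-- The diagonal concentration `E^d` of `E`: diagonal with entries `∑_j |E_{ij}|`. -/
def diagConc {n : ℕ} (E : Matrix (Fin n) (Fin n) ℝ) : Matrix (Fin n) (Fin n) ℝ :=
  Matrix.diagonal (fun i => ∑ j, |E i j|)

/-- `E` is interior to `S` if `P_S E P_S = E`. -/
def InteriorTo {n : ℕ} (E : Matrix (Fin n) (Fin n) ℝ) (S : Finset (Fin n)) : Prop :=
  projSet S * E * projSet S = E

/-- The interior energy `underline(A)_S = ∑_{E_k interior to S} E_k`. -/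
def interiorEnergy {n m : ℕ} (E : Fin m → Matrix (Fin n) (Fin n) ℝ) (S : Finset (Fin n)) :
    Matrix (Fin n) (Fin n) ℝ :=
  ∑ k, if InteriorTo (E k) S then E k else 0

/-- The closed energy
`overline(A)_S = underline(A)_S + ∑_{E_k not interior to S} P_S E_k^d P_S`. -/
def closedEnergy {n m : ℕ} (E : Fin m → Matrix (Fin n) (Fin n) ℝ) (S : Finset (Fin n)) :
    Matrix (Fin n) (Fin n) ℝ :=
  interiorEnergy E S +
    ∑ k, if InteriorTo (E k) S then 0 else projSet S * diagConc (E k) * projSet S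

/-- A partition of `{1,…,n}` into pairwise disjoint nonempty subsets covering everything. -/
def IsPartition {n M : ℕ} (P : Fin M → Finset (Fin n)) : Prop :=
  (∀ j, (P j).Nonempty) ∧ (∀ j j', j ≠ j' → Disjoint (P j) (P j')) ∧
    Finset.univ.biUnion P = Finset.univ

/-- Euclidean norm of a vector. -/
def norm2 {ι : Type} [Fintype ι] (x : ι → ℝ) : ℝ := Real.sqrt (x ⬝ᵥ x)

/-- `A`-energy norm of a vector: `‖x‖_A = √(xᵀ A x)`. -/
def normA {ι : Type} [Fintype ι] (A : Matrix ι ι ℝ) (x : ι → ℝ) : ℝ :=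
  Real.sqrt (x ⬝ᵥ A.mulVec x)

/-- Spectral (ℓ²-operator) norm of a square real matrix. -/
def specNorm {ι : Type} [Fintype ι] [DecidableEq ι] (B : Matrix ι ι ℝ) : ℝ :=
  ‖Matrix.toEuclideanCLM (𝕜 := ℝ) B‖

/-- Smallest value of the Rayleigh quotient; for a symmetric matrix this is the
smallest eigenvalue. -/
def lamMin {ι : Type} [Fintype ι] (B : Matrix ι ι ℝ) : ℝ :=
  sInf {r : ℝ | ∃ x : ι → ℝ, x ⬝ᵥ x = 1 ∧ r = x ⬝ᵥ B.mulVec x}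

/-- Largest value of the Rayleigh quotient; for a symmetric matrix this is the
largest eigenvalue. -/
def lamMax {ι : Type} [Fintype ι] (B : Matrix ι ι ℝ) : ℝ :=
  sSup {r : ℝ | ∃ x : ι → ℝ, x ⬝ᵥ x = 1 ∧ r = x ⬝ᵥ B.mulVec x}

/-- Patch layers: `S_0(P_j) = P_j` and `S_{k+1}(P_j)` adds all patches `P_{j'}` such that
some energy element has a nonzero row indexed in `P_{j'}` and a nonzero row indexed in
`S_k(P_j)`. -/
def layer {n m M : ℕ} (E : Fin m → Matrix (Fin n) (Fin n) ℝ) (P : Fin M → Finset (Fin n))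
    (j : Fin M) : ℕ → Finset (Fin n)
  | 0 => P j
  | (k+1) => layer E P j k ∪ Finset.univ.biUnion (fun j' =>
      if (∃ l, (∃ r ∈ P j', (E l) r ≠ 0) ∧ (∃ r ∈ layer E P j k, (E l) r ≠ 0))
      then P j' else ∅)

/-- Condition factor `δ(P_j) = ‖(Φ̂_jᵀ (overline(A)_{P_j}|_{P_j})⁻¹ Φ̂_j)⁻¹‖₂`, where
`Φ̂_j` is the submatrix of `Φ_j` on the rows in `P_j` and `overline(A)_{P_j}|_{P_j}` is the
submatrix of the closed energy on the rows and columns in `P_j`. -/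
def condFactor {n m : ℕ} (E : Fin m → Matrix (Fin n) (Fin n) ℝ) (S : Finset (Fin n))
    {qj : ℕ} (Φj : Matrix (Fin n) (Fin qj) ℝ) : ℝ :=
  specNorm ((((Φj.submatrix (Subtype.val : {i // i ∈ S} → Fin n) id))ᵀ *
      ((closedEnergy E S).submatrix (Subtype.val : {i // i ∈ S} → Fin n) Subtype.val)⁻¹ *
      (Φj.submatrix (Subtype.val : {i // i ∈ S} → Fin n) id))⁻¹)

/-- The combined matrix `Φ = [Φ_1 ⋯ Φ_M]`, with columns indexed by pairs `⟨j, c⟩`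
(column `c` of the block `Φ_j`). -/
def bigPhi {n M : ℕ} (q : Fin M → ℕ) (Φ : (j : Fin M) → Matrix (Fin n) (Fin (q j)) ℝ) :
    Matrix (Fin n) ((j : Fin M) × Fin (q j)) ℝ :=
  fun r c => Φ c.1 r c.2

/-- `ψ` is a minimizer of `‖x‖_A` over vectors supported in `S` subject to `Φᵀ x = e_i`. -/
def IsMinimizerOn {n : ℕ} {ι : Type} [Fintype ι] [DecidableEq ι]
    (A : Matrix (Fin n) (Fin n) ℝ) (Φ : Matrix (Fin n) ι ℝ) (S : Finset (Fin n)) (i : ι)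
    (ψ : Fin n → ℝ) : Prop :=
  (∀ r, r ∉ S → ψ r = 0) ∧ Φᵀ.mulVec ψ = Pi.single i 1 ∧
    ∀ x : Fin n → ℝ, (∀ r, r ∉ S → x r = 0) → Φᵀ.mulVec x = Pi.single i 1 →
      ψ ⬝ᵥ A.mulVec ψ ≤ x ⬝ᵥ A.mulVec x

/-- `α(P_j)`: the largest value of `(xᵀ overline(A)_{P_j} x)/(xᵀ underline(A)_{P_j} x)`
over nonzero `x` in the column span of `U_j`. -/
def alphaFactor {n m : ℕ} (E : Fin m → Matrix (Fin n) (Fin n) ℝ) (S : Finset (Fin n))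
    {uj : ℕ} (Uj : Matrix (Fin n) (Fin uj) ℝ) : ℝ :=
  sSup {r : ℝ | ∃ x ∈ Submodule.span ℝ (Set.range Ujᵀ), x ≠ 0 ∧
    r = (x ⬝ᵥ (closedEnergy E S).mulVec x) / (x ⬝ᵥ (interiorEnergy E S).mulVec x)}

/-!
Both inequalities split into one inequality per energy element `E = E_k`. Since the parts are
disjoint, a nonzero `E` is interior to at most one of them. If it is interior to `P_{j₀}`, it
occurs once in `∑_j underline(A)_{P_j}` and in `∑_j overline(A)_{P_j}` it occurs once next to
further positive semidefinite terms. Otherwise it is absent from the interior sum and the parts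
of the closed sums add up to its diagonal concentration `E^d`; finally `E ⪯ E^d`, because
`2 xᵢ E_{ij} xⱼ ≤ |E_{ij}| (xᵢ² + xⱼ²)`.
-/

open Function

section

variable {n : ℕ}

lemma projSet_mul_diagonal_mul_projSet (S : Finset (Fin n)) (d : Fin n → ℝ) :
    projSet S * diagonal d * projSet S = diagonal fun i => if i ∈ S then d i else 0 := by
  simp only [projSet, diagonal_mul_diagonal]
  congr 1
  ext i
  split_ifs <;> simp

lemma projSet_mul_projSet_of_disjoint {S T : Finset (Fin n)} (h : Disjoint S T) :
    projSet S * projSet T = 0 := by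
  rw [projSet, projSet, diagonal_mul_diagonal, ← diagonal_zero]
  congr 1
  ext i
  by_cases hS : i ∈ S
  · simp [hS, Finset.disjoint_left.mp h hS]
  · simp [hS]

lemma InteriorTo.eq_zero_of_disjoint {E : Matrix (Fin n) (Fin n) ℝ} {S T : Finset (Fin n)}
    (hS : InteriorTo E S) (hT : InteriorTo E T) (h : Disjoint S T) : E = 0 := by
  rw [← hS, ← hT]
  simp only [← Matrix.mul_assoc, projSet_mul_projSet_of_disjoint h, Matrix.zero_mul]

lemma posSemidef_projSet_mul_diagConc_mul_projSet (S : Finset (Fin n))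
    (B : Matrix (Fin n) (Fin n) ℝ) : (projSet S * diagConc B * projSet S).PosSemidef := by
  rw [diagConc, projSet_mul_diagonal_mul_projSet]
  refine PosSemidef.diagonal fun i => ?_
  dsimp only
  split_ifs
  exacts [Finset.sum_nonneg fun j _ => abs_nonneg _, le_rfl]

lemma sum_projSet_mul_diagConc_mul_projSet {M : ℕ} {P : Fin M → Finset (Fin n)}
    (hdisj : Pairwise (Disjoint on P)) (hcover : Finset.univ.biUnion P = Finset.univ)
    (B : Matrix (Fin n) (Fin n) ℝ) :
    ∑ j, projSet (P j) * diagConc B * projSet (P j) = diagConc B := by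
  ext i i'
  simp only [diagConc, projSet_mul_diagonal_mul_projSet, Matrix.sum_apply, diagonal_apply]
  obtain ⟨j₀, -, hj₀⟩ := Finset.mem_biUnion.mp (hcover ▸ Finset.mem_univ i)
  rw [Finset.sum_eq_single j₀ (fun j _ hj => ?_) (by simp), if_pos hj₀]
  rw [if_neg fun hi => Finset.disjoint_left.mp (hdisj hj) hi hj₀, ite_self]

lemma two_mul_mul_mul_le_abs_mul_add (b s t : ℝ) : 2 * (s * b * t) ≤ |b| * (s * s + t * t) :=
  calc 2 * (s * b * t) ≤ |b| * (2 * |s| * |t|) := by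
        have := le_abs_self (s * b * t)
        rw [abs_mul, abs_mul] at this
        linarith
    _ ≤ |b| * (|s| * |s| + |t| * |t|) :=
        mul_le_mul_of_nonneg_left (by nlinarith [sq_nonneg (|s| - |t|)]) (abs_nonneg b)
    _ = |b| * (s * s + t * t) := by rw [abs_mul_abs_self, abs_mul_abs_self]

lemma dotProduct_diagConc_sub_mulVec (B : Matrix (Fin n) (Fin n) ℝ) (x : Fin n → ℝ) :
    x ⬝ᵥ (diagConc B - B) *ᵥ x = ∑ i, ∑ j, (|B i j| * (x i * x i) - x i * B i j * x j) := by
  have hD : x ⬝ᵥ diagConc B *ᵥ x = ∑ i, ∑ j, |B i j| * (x i * x i) := by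
    simp only [diagConc, mulVec_diagonal, dotProduct, ← Finset.sum_mul]
    exact Finset.sum_congr rfl fun i _ => by ring
  have hB : x ⬝ᵥ B *ᵥ x = ∑ i, ∑ j, x i * B i j * x j := by
    simp only [dotProduct, mulVec, Finset.mul_sum, mul_assoc]
  simp only [sub_mulVec, dotProduct_sub, hD, hB, Finset.sum_sub_distrib]

lemma posSemidef_diagConc_sub {B : Matrix (Fin n) (Fin n) ℝ} (hB : B.IsHermitian) :
    (diagConc B - B).PosSemidef := by
  refine .of_dotProduct_mulVec_nonneg ((isHermitian_diagonal _).sub hB) fun x => ?_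
  have hsymm : ∀ i j, B j i = B i j := fun i j => by simpa using congrFun₂ hB i j
  set f := fun i j => |B i j| * (x i * x i) - x i * B i j * x j
  have hpair : ∀ i j, 0 ≤ f i j + f j i := fun i j => by
    simp only [f, hsymm i j]
    linarith [two_mul_mul_mul_le_abs_mul_add (B i j) (x i) (x j)]
  have htwice : 2 * ∑ i, ∑ j, f i j = ∑ i, ∑ j, (f i j + f j i) := by
    rw [two_mul]
    nth_rewrite 2 [Finset.sum_comm]
    simp only [Finset.sum_add_distrib]
  rw [star_trivial, dotProduct_diagConc_sub_mulVec]
  have := Finset.sum_nonneg fun i (_ : i ∈ Finset.univ) =>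
    Finset.sum_nonneg fun j (_ : j ∈ Finset.univ) => hpair i j
  linarith

def interiorPart (E : Matrix (Fin n) (Fin n) ℝ) (S : Finset (Fin n)) : Matrix (Fin n) (Fin n) ℝ :=
  if InteriorTo E S then E else 0

def closedPart (E : Matrix (Fin n) (Fin n) ℝ) (S : Finset (Fin n)) : Matrix (Fin n) (Fin n) ℝ :=
  if InteriorTo E S then E else projSet S * diagConc E * projSet S

lemma interiorEnergy_eq_sum_interiorPart {m : ℕ} (E : Fin m → Matrix (Fin n) (Fin n) ℝ)
    (S : Finset (Fin n)) : interiorEnergy E S = ∑ k, interiorPart (E k) S :=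
  rfl

lemma closedEnergy_eq_sum_closedPart {m : ℕ} (E : Fin m → Matrix (Fin n) (Fin n) ℝ)
    (S : Finset (Fin n)) : closedEnergy E S = ∑ k, closedPart (E k) S := by
  rw [closedEnergy, interiorEnergy, ← Finset.sum_add_distrib]
  refine Finset.sum_congr rfl fun k _ => ?_
  unfold closedPart
  split_ifs <;> simp

lemma posSemidef_closedPart {E : Matrix (Fin n) (Fin n) ℝ} (hE : E.PosSemidef)
    (S : Finset (Fin n)) : (closedPart E S).PosSemidef := by
  unfold closedPart
  split_ifs
  exacts [hE, posSemidef_projSet_mul_diagConc_mul_projSet S E]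

variable {M : ℕ} {E : Matrix (Fin n) (Fin n) ℝ} {P : Fin M → Finset (Fin n)}

lemma sum_interiorPart_of_interiorTo (hP : Pairwise (Disjoint on P)) {j₀ : Fin M}
    (hj₀ : InteriorTo E (P j₀)) : ∑ j, interiorPart E (P j) = E := by
  rw [Finset.sum_eq_single j₀ (fun j _ hj => ?_) (by simp), interiorPart, if_pos hj₀]
  unfold interiorPart
  split_ifs with hint
  exacts [hint.eq_zero_of_disjoint hj₀ (hP hj), rfl]

lemma posSemidef_sub_sum_interiorPart (hE : E.PosSemidef) (hP : Pairwise (Disjoint on P)) :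
    (E - ∑ j, interiorPart E (P j)).PosSemidef := by
  by_cases h : ∃ j₀, InteriorTo E (P j₀)
  · obtain ⟨j₀, hj₀⟩ := h
    rw [sum_interiorPart_of_interiorTo hP hj₀, sub_self]
    exact .zero
  · push Not at h
    simpa [interiorPart, h] using hE

lemma posSemidef_sum_closedPart_sub (hE : E.PosSemidef) (hP : Pairwise (Disjoint on P))
    (hcover : Finset.univ.biUnion P = Finset.univ) :
    (∑ j, closedPart E (P j) - E).PosSemidef := by
  by_cases h : ∃ j₀, InteriorTo E (P j₀)
  · obtain ⟨j₀, hj₀⟩ := h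
    rw [← Finset.add_sum_erase _ _ (Finset.mem_univ j₀), closedPart, if_pos hj₀,
      add_sub_cancel_left]
    exact posSemidef_sum _ fun j _ => posSemidef_closedPart hE (P j)
  · push Not at h
    simp only [closedPart, h, if_false, sum_projSet_mul_diagConc_mul_projSet hP hcover]
    exact posSemidef_diagConc_sub hE.1

end

theorem sum_interiorEnergy_le_le_sum_closedEnergy_general {n m M : ℕ}
    (A : Matrix (Fin n) (Fin n) ℝ)
    (E : Fin m → Matrix (Fin n) (Fin n) ℝ) (hE : ∀ k, (E k).PosSemidef)
    (hsum : A = ∑ k, E k)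
    (P : Fin M → Finset (Fin n)) (hP : IsPartition P) :
    (A - ∑ j, interiorEnergy E (P j)).PosSemidef ∧
      ((∑ j, closedEnergy E (P j)) - A).PosSemidef := by
  have hinterior :
      A - ∑ j, interiorEnergy E (P j) = ∑ k, (E k - ∑ j, interiorPart (E k) (P j)) := by
    simp only [hsum, interiorEnergy_eq_sum_interiorPart, Finset.sum_sub_distrib]
    rw [Finset.sum_comm]
  have hclosed :
      (∑ j, closedEnergy E (P j)) - A = ∑ k, (∑ j, closedPart (E k) (P j) - E k) := by
    simp only [hsum, closedEnergy_eq_sum_closedPart, Finset.sum_sub_distrib]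
    rw [Finset.sum_comm]
  rw [hinterior, hclosed]
  obtain ⟨-, hdisj, hcover⟩ := hP
  exact ⟨posSemidef_sum _ fun k _ => posSemidef_sub_sum_interiorPart (hE k) fun _ _ => hdisj _ _,
    posSemidef_sum _ fun k _ => posSemidef_sum_closedPart_sub (hE k) (fun _ _ => hdisj _ _) hcover⟩

/-- Let `A` be SPD with energy decomposition `{E_k}` and `𝒫 = {P_j}` a
partition of `{1,…,n}`. Then `∑_j underline(A)_{P_j} ⪯ A ⪯ ∑_j overline(A)_{P_j}`
in the Loewner order. -/
theorem sum_interiorEnergy_le_le_sum_closedEnergy {n m M : ℕ}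
    (A : Matrix (Fin n) (Fin n) ℝ) (hA : A.PosDef)
    (E : Fin m → Matrix (Fin n) (Fin n) ℝ) (hE : ∀ k, (E k).PosSemidef)
    (hsum : A = ∑ k, E k)
    (P : Fin M → Finset (Fin n)) (hP : IsPartition P) :
    (A - ∑ j, interiorEnergy E (P j)).PosSemidef ∧
      ((∑ j, closedEnergy E (P j)) - A).PosSemidef :=
  sum_interiorEnergy_le_le_sum_closedEnergy_general A E hE hsum P hP
end
end

section
/- Let A be an n×n real symmetric positive definite matrix and Φ an n×N real matrix with full column rank, so that ΦᵀA⁻¹Φ is invertible, and set Ψ = A⁻¹Φ(ΦᵀA⁻¹Φ)⁻¹ with columns ψ_1,…,ψ_N. Then for each i and every x ∈ ℝⁿ with Φᵀx = e_i (the i-th standard basis vector of ℝᴺ), one has ‖x‖²_A = ‖ψ_i‖²_A + ‖x − ψ_i‖²_A; in particular ψ_i is the unique minimizer of ‖x‖_A subject to the constraints φ_{i'}ᵀ x = δ_{i',i} for all 1 ≤ i' ≤ N, where φ_{i'} denotes the i'-th column of Φ. -/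
open Matrix BigOperators

noncomputable section

/-
Since `A Ψ = Φ (ΦᵀA⁻¹Φ)⁻¹`, the vector `A ψ_i` lies in the column space of `Φ`, so it is
`A`-orthogonal to every `y` with `Φᵀ y = 0`, in particular to `x - ψ_i` for a feasible `x`.
Pythagoras for the symmetric form `(u, v) ↦ uᵀ A v` then gives the energy identity, and positive
definiteness turns it into minimality and uniqueness.
-/

section EnergyIdentity

variable {ι κ R : Type*} [Fintype ι] [Fintype κ] [CommRing R]

lemma Matrix.IsSymm.dotProduct_mulVec_comm {A : Matrix ι ι R} (hA : A.IsSymm) (u v : ι → R) :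
    u ⬝ᵥ A *ᵥ v = v ⬝ᵥ A *ᵥ u := by
  rw [dotProduct_mulVec, ← mulVec_transpose, hA.eq, dotProduct_comm]

lemma Matrix.IsSymm.dotProduct_mulVec_add_self_of_orthogonal {A : Matrix ι ι R} (hA : A.IsSymm)
    {u v : ι → R} (huv : u ⬝ᵥ A *ᵥ v = 0) :
    (u + v) ⬝ᵥ A *ᵥ (u + v) = u ⬝ᵥ A *ᵥ u + v ⬝ᵥ A *ᵥ v := by
  have hvu : v ⬝ᵥ A *ᵥ u = 0 := by rw [hA.dotProduct_mulVec_comm, huv]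
  simp only [mulVec_add, add_dotProduct, dotProduct_add, huv, hvu]
  ring

lemma dotProduct_mulVec_eq_zero_of_transpose_mulVec_eq_zero {A : Matrix ι ι R}
    {Φ : Matrix ι κ R} {ψ y : ι → R} {c : κ → R} (hψ : A *ᵥ ψ = Φ *ᵥ c) (hy : Φᵀ *ᵥ y = 0) :
    y ⬝ᵥ A *ᵥ ψ = 0 := by
  rw [hψ, dotProduct_mulVec, ← mulVec_transpose, hy, zero_dotProduct]

theorem Matrix.IsSymm.dotProduct_mulVec_self_eq_add {A : Matrix ι ι R} (hA : A.IsSymm)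
    {Φ : Matrix ι κ R} {ψ x : ι → R} {c : κ → R} (hψ : A *ᵥ ψ = Φ *ᵥ c)
    (hx : Φᵀ *ᵥ x = Φᵀ *ᵥ ψ) :
    x ⬝ᵥ A *ᵥ x = ψ ⬝ᵥ A *ᵥ ψ + (x - ψ) ⬝ᵥ A *ᵥ (x - ψ) := by
  have horth : ψ ⬝ᵥ A *ᵥ (x - ψ) = 0 := by
    rw [hA.dotProduct_mulVec_comm]
    exact dotProduct_mulVec_eq_zero_of_transpose_mulVec_eq_zero hψ (by rw [mulVec_sub, hx, sub_self])
  rw [← hA.dotProduct_mulVec_add_self_of_orthogonal horth, add_sub_cancel]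

end EnergyIdentity

section EnergyNorm

variable {ι : Type} [Fintype ι] {A : Matrix ι ι ℝ} {ψ x : ι → ℝ}

lemma Matrix.PosSemidef.dotProduct_mulVec_self_nonneg (hA : A.PosSemidef) (x : ι → ℝ) :
    0 ≤ x ⬝ᵥ A *ᵥ x := by
  simpa only [star_trivial] using hA.dotProduct_mulVec_nonneg x

lemma Matrix.PosSemidef.normA_sq (hA : A.PosSemidef) (x : ι → ℝ) :
    normA A x ^ 2 = x ⬝ᵥ A *ᵥ x :=
  Real.sq_sqrt (hA.dotProduct_mulVec_self_nonneg x)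

lemma Matrix.PosSemidef.normA_le_of_dotProduct_mulVec_self_eq_add (hA : A.PosSemidef)
    (h : x ⬝ᵥ A *ᵥ x = ψ ⬝ᵥ A *ᵥ ψ + (x - ψ) ⬝ᵥ A *ᵥ (x - ψ)) :
    normA A ψ ≤ normA A x :=
  Real.sqrt_le_sqrt (by linarith [hA.dotProduct_mulVec_self_nonneg (x - ψ)])

lemma Matrix.PosDef.eq_of_normA_eq_of_dotProduct_mulVec_self_eq_add (hA : A.PosDef)
    (h : x ⬝ᵥ A *ᵥ x = ψ ⬝ᵥ A *ᵥ ψ + (x - ψ) ⬝ᵥ A *ᵥ (x - ψ)) (hnorm : normA A x = normA A ψ) :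
    x = ψ := by
  have hsq : x ⬝ᵥ A *ᵥ x = ψ ⬝ᵥ A *ᵥ ψ := by
    rw [← hA.posSemidef.normA_sq, ← hA.posSemidef.normA_sq, hnorm]
  by_contra hne
  have hpos : 0 < (x - ψ) ⬝ᵥ A *ᵥ (x - ψ) := by
    simpa only [star_trivial] using hA.dotProduct_mulVec_pos (sub_ne_zero.mpr hne)
  linarith

end EnergyNorm

lemma Matrix.transpose_mul_inv_mul_mul_inv {ι κ R : Type*} [Fintype ι] [Fintype κ]
    [DecidableEq ι] [DecidableEq κ] [CommRing R] {A : Matrix ι ι R} {Φ : Matrix ι κ R}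
    (h : IsUnit (Φᵀ * A⁻¹ * Φ).det) :
    Φᵀ * (A⁻¹ * Φ * (Φᵀ * A⁻¹ * Φ)⁻¹) = 1 := by
  rw [← Matrix.mul_assoc, ← Matrix.mul_assoc, mul_nonsing_inv _ h]

theorem psi_column_is_unique_energy_minimizer_general {n N : ℕ}
    (A : Matrix (Fin n) (Fin n) ℝ) (hA : A.PosDef)
    (Φ : Matrix (Fin n) (Fin N) ℝ)
    (hinv : IsUnit (Φᵀ * A⁻¹ * Φ).det)
    (i : Fin N) (ψi : Fin n → ℝ)
    (hψi : ψi = fun r => (A⁻¹ * Φ * (Φᵀ * A⁻¹ * Φ)⁻¹) r i) :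
    Φᵀ.mulVec ψi = Pi.single i 1 ∧
    (∀ x : Fin n → ℝ, Φᵀ.mulVec x = Pi.single i 1 →
      x ⬝ᵥ A.mulVec x =
        ψi ⬝ᵥ A.mulVec ψi + (x - ψi) ⬝ᵥ A.mulVec (x - ψi)) ∧
    (∀ x : Fin n → ℝ, Φᵀ.mulVec x = Pi.single i 1 →
      normA A ψi ≤ normA A x) ∧
    (∀ x : Fin n → ℝ, Φᵀ.mulVec x = Pi.single i 1 →
      normA A x = normA A ψi → x = ψi) := by
  set M := Φᵀ * A⁻¹ * Φ
  have hψ : ψi = (A⁻¹ * Φ * M⁻¹) *ᵥ Pi.single i 1 := by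
    rw [hψi, mulVec_single_one]
    rfl
  have hcons : Φᵀ *ᵥ ψi = Pi.single i 1 := by
    rw [hψ, mulVec_mulVec, transpose_mul_inv_mul_mul_inv hinv, one_mulVec]
  have hAψ : A *ᵥ ψi = Φ *ᵥ (M⁻¹ *ᵥ Pi.single i 1) := by
    rw [hψ, mulVec_mulVec, mulVec_mulVec, Matrix.mul_assoc,
      mul_nonsing_inv_cancel_left _ _ (isUnit_iff_ne_zero.mpr hA.det_pos.ne')]
  have hsymm : A.IsSymm := by
    rw [IsSymm, ← conjTranspose_eq_transpose_of_trivial]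
    exact hA.isHermitian
  have henergy : ∀ x : Fin n → ℝ, Φᵀ *ᵥ x = Pi.single i 1 →
      x ⬝ᵥ A *ᵥ x = ψi ⬝ᵥ A *ᵥ ψi + (x - ψi) ⬝ᵥ A *ᵥ (x - ψi) := fun x hx =>
    hsymm.dotProduct_mulVec_self_eq_add hAψ (hx.trans hcons.symm)
  exact ⟨hcons, henergy,
    fun x hx => hA.posSemidef.normA_le_of_dotProduct_mulVec_self_eq_add (henergy x hx),
    fun x hx => hA.eq_of_normA_eq_of_dotProduct_mulVec_self_eq_add (henergy x hx)⟩

/-- With `Ψ = A⁻¹Φ(ΦᵀA⁻¹Φ)⁻¹`, each column `ψ_i` satisfies the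
constraints `Φᵀψ_i = e_i`, the Pythagorean identity
`‖x‖²_A = ‖ψ_i‖²_A + ‖x − ψ_i‖²_A` for every feasible `x`, and in particular `ψ_i`
is the unique minimizer of `‖x‖_A` subject to `Φᵀx = e_i`. -/
theorem psi_column_is_unique_energy_minimizer {n N : ℕ}
    (A : Matrix (Fin n) (Fin n) ℝ) (hA : A.PosDef)
    (Φ : Matrix (Fin n) (Fin N) ℝ)
    (hΦind : LinearIndependent ℝ (fun i : Fin N => Φᵀ i))
    (hinv : IsUnit (Φᵀ * A⁻¹ * Φ).det)
    (i : Fin N) (ψi : Fin n → ℝ)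
    (hψi : ψi = fun r => (A⁻¹ * Φ * (Φᵀ * A⁻¹ * Φ)⁻¹) r i) :
    Φᵀ.mulVec ψi = Pi.single i 1 ∧
    (∀ x : Fin n → ℝ, Φᵀ.mulVec x = Pi.single i 1 →
      x ⬝ᵥ A.mulVec x =
        ψi ⬝ᵥ A.mulVec ψi + (x - ψi) ⬝ᵥ A.mulVec (x - ψi)) ∧
    (∀ x : Fin n → ℝ, Φᵀ.mulVec x = Pi.single i 1 →
      normA A ψi ≤ normA A x) ∧
    (∀ x : Fin n → ℝ, Φᵀ.mulVec x = Pi.single i 1 →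
      normA A x = normA A ψi → x = ψi) :=
  psi_column_is_unique_energy_minimizer_general A hA Φ hinv i ψi hψi
end
end
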